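/- arXiv:2005.08871 — 4 statements merged into one kernel-verified Lean document; each statement's English description precedes it below -/
import Mathlib

section
/- Let $R$ be a commutative ring containing elements $\tau, \gamma, \epsilon$ satisfying $\epsilon^2 = 1$, $\epsilon\tau = -\tau$, and $\tau^2 = 2(1-\epsilon)\gamma$. Define a sequence $(x_n)_{n \geq 0}$ by $x_0 = 2$, $x_1 = \tau$, and $x_n = \tau x_{n-1} - \gamma x_{n-2}$ for $n \geq 2$. Then for all $n \geq 1$: if $n$ is odd, $x_n = \tau\gamma^{(n-1)/2}$, and if $n$ is even, $x_n = 2(-\epsilon)^{n/2}\gamma^{n/2}$. -/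
/-!
Since `-ε` fixes both `τ` and `1 - ε`, the powers of `-ε` produced by the recurrence collapse,
and the closed forms of `x (2k)` and `x (2k+1)` follow by a joint induction on `k`.
-/

theorem pow_mul_eq_of_mul_eq {M : Type*} [Monoid M] {a b : M} (h : a * b = b) (k : ℕ) :
    a ^ k * b = b := by
  induction k with
  | zero => rw [pow_zero, one_mul]
  | succ k ih => rw [pow_succ, mul_assoc, h, ih]

section AdamsRecurrence

variable {R : Type*} [CommRing R] {τ γ ε : R}

theorem neg_mul_one_sub_of_sq_eq_one (hε : ε ^ 2 = 1) : -ε * (1 - ε) = 1 - ε := by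
  linear_combination hε

theorem adams_even_odd (hε : ε ^ 2 = 1) (hετ : ε * τ = -τ) (hτ : τ ^ 2 = 2 * (1 - ε) * γ)
    {x : ℕ → R} (hx0 : x 0 = 2) (hx1 : x 1 = τ)
    (hrec : ∀ n, x (n + 2) = τ * x (n + 1) - γ * x n) (k : ℕ) :
    x (2 * k) = 2 * (-ε) ^ k * γ ^ k ∧ x (2 * k + 1) = τ * γ ^ k := by
  have hfixτ (k : ℕ) : (-ε) ^ k * τ = τ :=
    pow_mul_eq_of_mul_eq (by rw [neg_mul, hετ, neg_neg]) k
  have hfix1ε (k : ℕ) : (-ε) ^ k * (1 - ε) = 1 - ε :=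
    pow_mul_eq_of_mul_eq (neg_mul_one_sub_of_sq_eq_one hε) k
  induction k with
  | zero => simp [hx0, hx1]
  | succ k ih =>
    obtain ⟨hev, hodd⟩ := ih
    have hev' : x (2 * (k + 1)) = 2 * (-ε) ^ (k + 1) * γ ^ (k + 1) := by
      rw [show 2 * (k + 1) = 2 * k + 2 by ring, hrec, hev, hodd]
      linear_combination γ ^ k * hτ - 2 * γ ^ (k + 1) * hfix1ε k
    refine ⟨hev', ?_⟩
    rw [show 2 * (k + 1) + 1 = 2 * k + 1 + 2 by ring, hrec, hodd,
      show 2 * k + 1 + 1 = 2 * (k + 1) by ring, hev']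
    linear_combination 2 * γ ^ (k + 1) * hfixτ (k + 1)

end AdamsRecurrence

theorem adams_of_tau (R : Type*) [CommRing R] (τ γ ε : R)
    (hε : ε ^ 2 = 1) (hετ : ε * τ = -τ) (hτ : τ ^ 2 = 2 * (1 - ε) * γ)
    (x : ℕ → R) (hx0 : x 0 = 2) (hx1 : x 1 = τ)
    (hrec : ∀ n, 2 ≤ n → x n = τ * x (n - 1) - γ * x (n - 2)) :
    ∀ n, 1 ≤ n →
      (Odd n → x n = τ * γ ^ ((n - 1) / 2)) ∧
      (Even n → x n = 2 * (-ε) ^ (n / 2) * γ ^ (n / 2)) := by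
  have hrec' : ∀ n, x (n + 2) = τ * x (n + 1) - γ * x n := fun n => hrec (n + 2) le_add_self
  have hclosed := adams_even_odd hε hετ hτ hx0 hx1 hrec'
  intro n _
  constructor
  · rintro ⟨k, rfl⟩
    simpa using (hclosed k).2
  · rintro ⟨k, rfl⟩
    simpa [← two_mul] using (hclosed k).1
end

section
/- Let $R$ be a commutative ring containing an element $\epsilon$ with $\epsilon^2 = 1$, and set $h = 1 - \epsilon$. Define a sequence $(x_n)_{n \geq 0}$ by $x_0 = 2$, $x_1 = h$, and $x_n = h\,x_{n-1} - x_{n-2}$ for $n \geq 2$. Then for all $n \geq 1$: if $n$ is odd, $x_n = h$, and if $n$ is even, $x_n = h + (-1)^{n/2}(1+\epsilon)$. -/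
/-!
With `h = 1 - ε` and `ε ^ 2 = 1` one has `h ^ 2 = 2 h` and `1 + ε = 2 - h`, so `h (1 + ε) = 0`.
Multiplying by `h` therefore kills the `(1 + ε)`-component of `x (2k)` and doubles `h`; the
recursion then returns `h` at every odd index, and at every even index it keeps `h` while
flipping the sign of the `(1 + ε)`-component.
-/

theorem recurrence_odd_even_of_mul_self_eq_two_mul {R : Type*} [CommRing R] {h : R}
    (hsq : h * h = 2 * h) {x : ℕ → R} (hx0 : x 0 = 2) (hx1 : x 1 = h)
    (hrec : ∀ n, x (n + 2) = h * x (n + 1) - x n) (k : ℕ) :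
    x (2 * k + 1) = h ∧ x (2 * k + 2) = h + (-1) ^ (k + 1) * (2 - h) := by
  induction k with
  | zero =>
    refine ⟨hx1, ?_⟩
    rw [hrec, hx1, hx0]
    linear_combination hsq
  | succ k ih =>
    obtain ⟨hodd, heven⟩ := ih
    have hodd' : x (2 * (k + 1) + 1) = h := by
      rw [show 2 * (k + 1) + 1 = 2 * k + 1 + 2 by ring, hrec, heven, hodd]
      linear_combination (1 - (-1) ^ (k + 1)) * hsq
    refine ⟨hodd', ?_⟩
    rw [show 2 * (k + 1) + 2 = 2 * k + 2 + 2 by ring, hrec,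
      show 2 * k + 2 + 1 = 2 * (k + 1) + 1 by ring, hodd', heven]
    linear_combination hsq

theorem adams_of_h (R : Type*) [CommRing R] (ε : R) (hε : ε ^ 2 = 1)
    (h : R) (hh : h = 1 - ε)
    (x : ℕ → R) (hx0 : x 0 = 2) (hx1 : x 1 = h)
    (hrec : ∀ n, 2 ≤ n → x n = h * x (n - 1) - x (n - 2)) :
    ∀ n, 1 ≤ n →
      (Odd n → x n = h) ∧
      (Even n → x n = h + (-1 : R) ^ (n / 2) * (1 + ε)) := by
  have hsq : h * h = 2 * h := by rw [hh]; linear_combination hε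
  have key := recurrence_odd_even_of_mul_self_eq_two_mul hsq hx0 hx1
    fun n ↦ by simpa using hrec (n + 2) (by omega)
  intro n hn
  constructor
  · rintro ⟨k, rfl⟩
    exact (key k).1
  · intro heven
    obtain ⟨k, rfl⟩ : ∃ k, n = 2 * k + 2 := ⟨n / 2 - 1, by grind⟩
    rw [(key k).2, show (2 * k + 2) / 2 = k + 1 by omega, hh]
    ring
end

section
/- Let $R$ be a commutative ring containing elements $\tau, \gamma, \epsilon$ satisfying $\epsilon^2 = 1$, $\epsilon\tau = -\tau$, and $\tau^2 = 2(1-\epsilon)\gamma$, and set $h = 1-\epsilon$. Define $\psi_\tau(n) = \tau\gamma^{(n-1)/2}$ for $n$ odd and $\psi_\tau(n) = 2(-\epsilon)^{n/2}\gamma^{n/2}$ for $n$ even (with $\psi_\tau(0)=2$). Define a sequence $(\omega(n))_{n\geq 0}$ by $\omega(0) = 0$, $\omega(1) = 1$, and $\omega(n) = \tau\,\omega(n-1) - \gamma\,\omega(n-2) + \psi_\tau(n-1)$ for $n \geq 2$. Then for all $n \geq 1$: if $n$ is odd, $\omega(n) = n\big(\tfrac{n-1}{2}h + (-\epsilon)^{(n-1)/2}\big)\gamma^{(n-1)/2}$,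 and if $n$ is even, $\omega(n) = \tfrac{n^2}{2}\tau\gamma^{(n-2)/2}$. -/
/-!
Split $n$ into $2k+1$ and $2k+2$ and prove both closed forms together by induction on $k$. Each step
is a ring identity in $\mathbb{Z}[k]$ modulo three consequences of the relations: $\tau^2 = 2h\gamma$,
$\tau h = 2\tau$, and $(-\epsilon)^k$ fixes both $\tau$ and $h$ (since $-\epsilon$ does).
-/

theorem pow_mul_eq_self_of_mul_eq_self {M : Type*} [Monoid M] {a x : M} (h : a * x = x) (k : ℕ) :
    a ^ k * x = x := by
  induction k with
  | zero => rw [pow_zero, one_mul]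
  | succ k ih => rw [pow_succ, mul_assoc, h, ih]

namespace OmegaExplicit

variable {R : Type*} [CommRing R] (τ γ ε : R)

/-- The claimed value of `ω (2 * k + 1)`. -/
def oddForm (k : ℕ) : R := (2 * k + 1) * (k * (1 - ε) + (-ε) ^ k) * γ ^ k

/-- The claimed value of `ω (2 * k + 2)`. -/
def evenForm (k : ℕ) : R := 2 * (k + 1) ^ 2 * τ * γ ^ k

variable {τ γ ε}

theorem oddForm_succ (hε : ε ^ 2 = 1) (hτ : τ ^ 2 = 2 * (1 - ε) * γ) (k : ℕ) :
    τ * evenForm τ γ k - γ * oddForm γ ε k + 2 * (-ε) ^ (k + 1) * γ ^ (k + 1) =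
      oddForm γ ε (k + 1) := by
  have hfix : (-ε) ^ k * (1 - ε) = 1 - ε :=
    pow_mul_eq_self_of_mul_eq_self (by linear_combination hε) k
  unfold oddForm evenForm
  push_cast
  linear_combination (2 * ((k : R) + 1) ^ 2 * γ ^ k) * hτ - ((2 * k + 1) * γ ^ (k + 1)) * hfix

theorem evenForm_succ (hετ : ε * τ = -τ) (k : ℕ) :
    τ * oddForm γ ε (k + 1) - γ * evenForm τ γ k + τ * γ ^ (k + 1) = evenForm τ γ (k + 1) := by
  have hfix : (-ε) ^ (k + 1) * τ = τ :=
    pow_mul_eq_self_of_mul_eq_self (by linear_combination -hετ) (k + 1)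
  unfold oddForm evenForm
  push_cast
  linear_combination (-(2 * (k : R) + 3) * (k + 1) * γ ^ (k + 1)) * hετ
    + ((2 * k + 3) * γ ^ (k + 1)) * hfix

theorem eq_oddForm_and_eq_evenForm (hε : ε ^ 2 = 1) (hετ : ε * τ = -τ)
    (hτ : τ ^ 2 = 2 * (1 - ε) * γ) {ψ ω : ℕ → R}
    (hψodd : ∀ n, Odd n → ψ n = τ * γ ^ ((n - 1) / 2))
    (hψeven : ∀ n, 1 ≤ n → Even n → ψ n = 2 * (-ε) ^ (n / 2) * γ ^ (n / 2))
    (hω0 : ω 0 = 0) (hω1 : ω 1 = 1)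
    (hrec : ∀ n, 2 ≤ n → ω n = τ * ω (n - 1) - γ * ω (n - 2) + ψ (n - 1)) (k : ℕ) :
    ω (2 * k + 1) = oddForm γ ε k ∧ ω (2 * k + 2) = evenForm τ γ k := by
  have ψ_odd (k : ℕ) : ψ (2 * k + 1) = τ * γ ^ k := by
    simpa using hψodd (2 * k + 1) (odd_two_mul_add_one k)
  have ψ_even (k : ℕ) : ψ (2 * k + 2) = 2 * (-ε) ^ (k + 1) * γ ^ (k + 1) := by
    simpa [Nat.mul_add_div] using hψeven (2 * k + 2) (by omega) ⟨k + 1, by ring⟩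
  have ω_step (m : ℕ) : ω (m + 2) = τ * ω (m + 1) - γ * ω m + ψ (m + 1) := by
    simpa using hrec (m + 2) (by omega)
  induction k with
  | zero =>
    refine ⟨by simp [hω1, oddForm], ?_⟩
    rw [ω_step 0, hω0, hω1, ψ_odd 0]
    simp only [evenForm]
    ring
  | succ k ih =>
    have ψ_next : ψ (2 * k + 2 + 1) = τ * γ ^ (k + 1) := ψ_odd (k + 1)
    have hodd : ω (2 * k + 2 + 1) = oddForm γ ε (k + 1) := by
      rw [ω_step (2 * k + 1), ih.2, ih.1, ψ_even, oddForm_succ hε hτ]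
    have heven : ω (2 * k + 2 + 2) = evenForm τ γ (k + 1) := by
      rw [ω_step, hodd, ih.2, ψ_next, evenForm_succ hετ]
    exact ⟨hodd, heven⟩

end OmegaExplicit

open OmegaExplicit in
theorem omega_explicit_general (R : Type*) [CommRing R] (τ γ ε : R)
    (hε : ε ^ 2 = 1) (hετ : ε * τ = -τ) (hτ : τ ^ 2 = 2 * (1 - ε) * γ)
    (h : R) (hh : h = 1 - ε)
    (ψ : ℕ → R)
    (hψodd : ∀ n, Odd n → ψ n = τ * γ ^ ((n - 1) / 2))
    (hψeven : ∀ n, 1 ≤ n → Even n → ψ n = 2 * (-ε) ^ (n / 2) * γ ^ (n / 2))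
    (ω : ℕ → R) (hω0 : ω 0 = 0) (hω1 : ω 1 = 1)
    (hrec : ∀ n, 2 ≤ n → ω n = τ * ω (n - 1) - γ * ω (n - 2) + ψ (n - 1)) :
    ∀ n, 1 ≤ n →
      (Odd n → ω n = (n : R) * ((((n - 1) / 2 : ℕ) : R) * h + (-ε) ^ ((n - 1) / 2))
          * γ ^ ((n - 1) / 2)) ∧
      (Even n → ω n = ((n ^ 2 / 2 : ℕ) : R) * τ * γ ^ ((n - 2) / 2)) := by
  subst hh
  have hω := eq_oddForm_and_eq_evenForm hε hετ hτ hψodd hψeven hω0 hω1 hrec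
  intro n hn
  refine ⟨fun ⟨k, hk⟩ => ?_, fun hn_even => ?_⟩
  · subst hk
    rw [(hω k).1, oddForm, show (2 * k + 1 - 1) / 2 = k by omega]
    push_cast
    ring
  · obtain ⟨k, rfl⟩ : ∃ k, n = 2 * k + 2 := by
      obtain ⟨j, rfl⟩ := hn_even
      exact ⟨j - 1, by omega⟩
    have hsq : (2 * k + 2) ^ 2 / 2 = 2 * (k + 1) ^ 2 := by
      rw [show (2 * k + 2) ^ 2 = 2 * (2 * (k + 1) ^ 2) by ring, Nat.mul_div_cancel_left _ two_pos]
    rw [(hω k).2, evenForm, hsq, show (2 * k + 2 - 2) / 2 = k by omega]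
    push_cast
    ring

theorem omega_explicit (R : Type*) [CommRing R] (τ γ ε : R)
    (hε : ε ^ 2 = 1) (hετ : ε * τ = -τ) (hτ : τ ^ 2 = 2 * (1 - ε) * γ)
    (h : R) (hh : h = 1 - ε)
    (ψ : ℕ → R) (hψ0 : ψ 0 = 2)
    (hψodd : ∀ n, Odd n → ψ n = τ * γ ^ ((n - 1) / 2))
    (hψeven : ∀ n, 1 ≤ n → Even n → ψ n = 2 * (-ε) ^ (n / 2) * γ ^ (n / 2))
    (ω : ℕ → R) (hω0 : ω 0 = 0) (hω1 : ω 1 = 1)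
    (hrec : ∀ n, 2 ≤ n → ω n = τ * ω (n - 1) - γ * ω (n - 2) + ψ (n - 1)) :
    ∀ n, 1 ≤ n →
      (Odd n → ω n = (n : R) * ((((n - 1) / 2 : ℕ) : R) * h + (-ε) ^ ((n - 1) / 2))
          * γ ^ ((n - 1) / 2)) ∧
      (Even n → ω n = ((n ^ 2 / 2 : ℕ) : R) * τ * γ ^ ((n - 2) / 2)) :=
  omega_explicit_general R τ γ ε hε hετ hτ h hh ψ hψodd hψeven ω hω0 hω1 hrec
end

section
/- Let $R$ be a commutative ring containing elements $\tau, \epsilon$ satisfying $\epsilon^2 = 1$, $\epsilon\tau = -\tau$, and $\tau^2 = 2(1-\epsilon)$. Then for all $v_1, v_2, v_3 \in R$, writing $\sigma(v_1) = v_1+v_2+v_3$, $\sigma(v_1v_2) = v_1v_2+v_1v_3+v_2v_3$, $\sigma(v_1^2) = v_1^2+v_2^2+v_3^2$, and $\sigma(v_1^2v_2) = \sum_{i \neq j} v_i^2 v_j$, one has: $\sum_{i<j}(v_i+\tau)^2(v_j+\tau)^2 - 2\sum_i (v_i+\tau)^2 - 3\tau\big((v_1+\tau)(v_2+\tau)(v_3+\tau)\big)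 + 12(1-\epsilon) = 2(1-2\epsilon)\sigma(v_1^2) + 2(1-\epsilon)\sigma(v_1v_2) + 2\tau\,\sigma(v_1^2v_2) - 3\tau\,v_1v_2v_3 + \sigma(v_1^2v_2^2)$, where $\sigma(v_1^2v_2^2) = v_1^2v_2^2 + v_1^2v_3^2 + v_2^2v_3^2$. -/
/-! As a polynomial in `τ`, the left-hand side has no `τ⁴` term, its `τ³` term is `τ³ σ(v₁)`,
and its remaining terms differ from the right-hand side only through `τ²`. So the identity
follows from `τ² = 2(1 - ε)` and its consequence `τ³ = 4τ`, which absorbs `τ³ σ(v₁)` into the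
term `-4τ σ(v₁)`. -/

theorem pow_three_eq_four_mul {R : Type*} [Ring R] {τ ε : R}
    (hετ : ε * τ = -τ) (hτ : τ ^ 2 = 2 * (1 - ε)) : τ ^ 3 = 4 * τ :=
  calc τ ^ 3 = τ ^ 2 * τ := pow_succ τ 2
    _ = 2 * (τ - ε * τ) := by rw [hτ, mul_assoc, sub_mul, one_mul]
    _ = 4 * τ := by rw [hετ]; noncomm_ring

theorem ternary_law_F2_general (R : Type*) [CommRing R] (τ ε : R)
    (hετ : ε * τ = -τ) (hτ : τ ^ 2 = 2 * (1 - ε)) :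
    ∀ v1 v2 v3 : R,
      ((v1 + τ) ^ 2 * (v2 + τ) ^ 2 + (v1 + τ) ^ 2 * (v3 + τ) ^ 2
          + (v2 + τ) ^ 2 * (v3 + τ) ^ 2)
        - 2 * ((v1 + τ) ^ 2 + (v2 + τ) ^ 2 + (v3 + τ) ^ 2)
        - 3 * τ * ((v1 + τ) * (v2 + τ) * (v3 + τ))
        + 12 * (1 - ε)
      = 2 * (1 - 2 * ε) * (v1 ^ 2 + v2 ^ 2 + v3 ^ 2)
        + 2 * (1 - ε) * (v1 * v2 + v1 * v3 + v2 * v3)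
        + 2 * τ * (v1 ^ 2 * v2 + v1 ^ 2 * v3 + v2 ^ 2 * v1 + v2 ^ 2 * v3
            + v3 ^ 2 * v1 + v3 ^ 2 * v2)
        - 3 * τ * (v1 * v2 * v3)
        + (v1 ^ 2 * v2 ^ 2 + v1 ^ 2 * v3 ^ 2 + v2 ^ 2 * v3 ^ 2) := by
  intro v1 v2 v3
  have hτ3 : τ ^ 3 = 4 * τ := pow_three_eq_four_mul hετ hτ
  linear_combination (v1 + v2 + v3) * hτ3
    + (2 * (v1 ^ 2 + v2 ^ 2 + v3 ^ 2) + (v1 * v2 + v1 * v3 + v2 * v3) - 6) * hτ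

theorem ternary_law_F2 (R : Type*) [CommRing R] (τ ε : R)
    (hε : ε ^ 2 = 1) (hετ : ε * τ = -τ) (hτ : τ ^ 2 = 2 * (1 - ε)) :
    ∀ v1 v2 v3 : R,
      ((v1 + τ) ^ 2 * (v2 + τ) ^ 2 + (v1 + τ) ^ 2 * (v3 + τ) ^ 2
          + (v2 + τ) ^ 2 * (v3 + τ) ^ 2)
        - 2 * ((v1 + τ) ^ 2 + (v2 + τ) ^ 2 + (v3 + τ) ^ 2)
        - 3 * τ * ((v1 + τ) * (v2 + τ) * (v3 + τ))
        + 12 * (1 - ε)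
      = 2 * (1 - 2 * ε) * (v1 ^ 2 + v2 ^ 2 + v3 ^ 2)
        + 2 * (1 - ε) * (v1 * v2 + v1 * v3 + v2 * v3)
        + 2 * τ * (v1 ^ 2 * v2 + v1 ^ 2 * v3 + v2 ^ 2 * v1 + v2 ^ 2 * v3
            + v3 ^ 2 * v1 + v3 ^ 2 * v2)
        - 3 * τ * (v1 * v2 * v3)
        + (v1 ^ 2 * v2 ^ 2 + v1 ^ 2 * v3 ^ 2 + v2 ^ 2 * v3 ^ 2) :=
  ternary_law_F2_general R τ ε hετ hτ
end
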